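/- arXiv:1403.0027 — 4 statements merged into one kernel-verified Lean document; each statement's English description precedes it below -/
import Mathlib

section
/- Let F be a finite-dimensional commutative associative normed ℝ-algebra and let u, v, w : ℝ → F be smooth and 1-periodic. With the bracket [v, w] := v ∘ w' − v' ∘ w and ω(u, v) := ∫₀¹ u ∘ v''' dx, the 2-cocycle identity holds: ω(u, [v, w]) + ω(v, [w, u]) + ω(w, [u, v]) = 0. -/
section GFaux

variable {F : Type*} [NormedCommRing F] [NormedAlgebra ℝ F]

private lemma GF.hasDerivAt_iter (f : ℝ → F) (hf : ContDiff ℝ (⊤ : ℕ∞) f) (k : ℕ) (x : ℝ) :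
    HasDerivAt (iteratedDeriv k f) (iteratedDeriv (k + 1) f x) x := by
  have h1 : Differentiable ℝ (iteratedDeriv k f) :=
    hf.differentiable_iteratedDeriv k (by exact_mod_cast lt_top_iff_ne_top.2 (by simp))
  have h2 := (h1 x).hasDerivAt
  rwa [iteratedDeriv_succ]

private lemma GF.periodic_iter (f : ℝ → F) (hf : Function.Periodic f 1) (k : ℕ) :
    Function.Periodic (iteratedDeriv k f) 1 := by
  induction k with
  | zero => simpa [iteratedDeriv_zero] using hf
  | succ n ih =>
    rw [iteratedDeriv_succ]
    intro x
    have hfe : (fun y => iteratedDeriv n f (y + 1)) = iteratedDeriv n f := funext fun y => ih y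
    calc deriv (iteratedDeriv n f) (x + 1)
        = deriv (fun y => iteratedDeriv n f (y + 1)) x := (deriv_comp_add_const ..).symm
      _ = deriv (iteratedDeriv n f) x := by rw [hfe]

private lemma GF.bracket3 (f g : ℝ → F) (hf : ContDiff ℝ (⊤ : ℕ∞) f) (hg : ContDiff ℝ (⊤ : ℕ∞) g) (x : ℝ) :
    iteratedDeriv 3 (fun y => f y * deriv g y - deriv f y * g y) x =
      f x * iteratedDeriv 4 g x + 2 * iteratedDeriv 1 f x * iteratedDeriv 3 g x
        - 2 * iteratedDeriv 3 f x * iteratedDeriv 1 g x - iteratedDeriv 4 f x * g x := by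
  have Hf := GF.hasDerivAt_iter f hf
  have Hg := GF.hasDerivAt_iter g hg
  have hf0 : ∀ y : ℝ, HasDerivAt f (iteratedDeriv 1 f y) y := by
    intro y; have := Hf 0 y; rwa [iteratedDeriv_zero] at this
  have hg0 : ∀ y : ℝ, HasDerivAt g (iteratedDeriv 1 g y) y := by
    intro y; have := Hg 0 y; rwa [iteratedDeriv_zero] at this
  have e0 : (fun y => f y * deriv g y - deriv f y * g y)
      = fun y => f y * iteratedDeriv 1 g y - iteratedDeriv 1 f y * g y := by
    funext y; simp [iteratedDeriv_one]
  have h1 : deriv (fun y => f y * iteratedDeriv 1 g y - iteratedDeriv 1 f y * g y)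
      = fun y => f y * iteratedDeriv 2 g y - iteratedDeriv 2 f y * g y := by
    funext y
    have hraw := ((hf0 y).mul (Hg 1 y)).sub ((Hf 1 y).mul (hg0 y))
    have : HasDerivAt (fun y => f y * iteratedDeriv 1 g y - iteratedDeriv 1 f y * g y)
        (f y * iteratedDeriv 2 g y - iteratedDeriv 2 f y * g y) y := by
      exact hraw.congr_deriv (by ring)
    exact this.deriv
  have h2 : deriv (fun y => f y * iteratedDeriv 2 g y - iteratedDeriv 2 f y * g y)
      = fun y => (iteratedDeriv 1 f y * iteratedDeriv 2 g y + f y * iteratedDeriv 3 g y)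
          - (iteratedDeriv 3 f y * g y + iteratedDeriv 2 f y * iteratedDeriv 1 g y) := by
    funext y
    exact (((hf0 y).mul (Hg 2 y)).sub ((Hf 2 y).mul (hg0 y))).deriv
  have h3 : deriv (fun y =>
        (iteratedDeriv 1 f y * iteratedDeriv 2 g y + f y * iteratedDeriv 3 g y)
          - (iteratedDeriv 3 f y * g y + iteratedDeriv 2 f y * iteratedDeriv 1 g y))
      = fun y => f y * iteratedDeriv 4 g y + 2 * iteratedDeriv 1 f y * iteratedDeriv 3 g y
          - 2 * iteratedDeriv 3 f y * iteratedDeriv 1 g y - iteratedDeriv 4 f y * g y := by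
    funext y
    have hraw := (((Hf 1 y).mul (Hg 2 y)).add ((hf0 y).mul (Hg 3 y))).sub
      (((Hf 3 y).mul (hg0 y)).add ((Hf 2 y).mul (Hg 1 y)))
    have : HasDerivAt (fun y =>
        (iteratedDeriv 1 f y * iteratedDeriv 2 g y + f y * iteratedDeriv 3 g y)
          - (iteratedDeriv 3 f y * g y + iteratedDeriv 2 f y * iteratedDeriv 1 g y))
        (f y * iteratedDeriv 4 g y + 2 * iteratedDeriv 1 f y * iteratedDeriv 3 g y
          - 2 * iteratedDeriv 3 f y * iteratedDeriv 1 g y - iteratedDeriv 4 f y * g y) y := by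
      exact hraw.congr_deriv (by ring)
    exact this.deriv
  have : iteratedDeriv 3 (fun y => f y * deriv g y - deriv f y * g y)
      = deriv (deriv (deriv (fun y => f y * deriv g y - deriv f y * g y))) := by
    simp [iteratedDeriv_succ, iteratedDeriv_zero]
  rw [this, e0, h1, h2, h3]

end GFaux

/-- The `F`-valued Gelfand–Fuchs pairing `ω(u,v) = ∫₀¹ u ∘ v''' dx` satisfies the
2-cocycle identity `ω(u,[v,w]) + ω(v,[w,u]) + ω(w,[u,v]) = 0` with respect to the
bracket `[v,w] = v ∘ w' − v' ∘ w`. -/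
theorem gelfandFuchs_cocycle
    {F : Type*} [NormedCommRing F] [NormedAlgebra ℝ F] [FiniteDimensional ℝ F]
    (u v w : ℝ → F)
    (hu : ContDiff ℝ (⊤ : ℕ∞) u) (hv : ContDiff ℝ (⊤ : ℕ∞) v) (hw : ContDiff ℝ (⊤ : ℕ∞) w)
    (hup : Function.Periodic u 1) (hvp : Function.Periodic v 1)
    (hwp : Function.Periodic w 1)
    (bracket : (ℝ → F) → (ℝ → F) → (ℝ → F))
    (hbracket : ∀ f g : ℝ → F,
      bracket f g = fun x => f x * deriv g x - deriv f x * g x)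
    (ω : (ℝ → F) → (ℝ → F) → F)
    (hω : ∀ f g : ℝ → F, ω f g = ∫ x in (0:ℝ)..1, f x * iteratedDeriv 3 g x) :
    ω u (bracket v w) + ω v (bracket w u) + ω w (bracket u v) = 0 := by
  -- continuity of iterated derivatives
  have hcont : ∀ (f : ℝ → F), ContDiff ℝ (⊤ : ℕ∞) f → ∀ k : ℕ, Continuous (iteratedDeriv k f) :=
    fun f hf k => (hf.differentiable_iteratedDeriv k
      (by exact_mod_cast lt_top_iff_ne_top.2 (by simp))).continuous
  have hcu := hcont u hu; have hcv := hcont v hv; have hcw := hcont w hw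
  have hcu0 : Continuous u := by simpa [iteratedDeriv_zero] using hcu 0
  have hcv0 : Continuous v := by simpa [iteratedDeriv_zero] using hcv 0
  have hcw0 : Continuous w := by simpa [iteratedDeriv_zero] using hcw 0
  -- the three ω-integrands
  set A : ℝ → F := fun x => u x * (v x * iteratedDeriv 4 w x
      + 2 * iteratedDeriv 1 v x * iteratedDeriv 3 w x
      - 2 * iteratedDeriv 3 v x * iteratedDeriv 1 w x - iteratedDeriv 4 v x * w x) with hA
  set B : ℝ → F := fun x => v x * (w x * iteratedDeriv 4 u x
      + 2 * iteratedDeriv 1 w x * iteratedDeriv 3 u x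
      - 2 * iteratedDeriv 3 w x * iteratedDeriv 1 u x - iteratedDeriv 4 w x * u x) with hB
  set C : ℝ → F := fun x => w x * (u x * iteratedDeriv 4 v x
      + 2 * iteratedDeriv 1 u x * iteratedDeriv 3 v x
      - 2 * iteratedDeriv 3 u x * iteratedDeriv 1 v x - iteratedDeriv 4 u x * v x) with hC
  have hAc : Continuous A := by
    apply hcu0.mul
    exact (((hcv0.mul (hcw 4)).add ((continuous_const.mul (hcv 1)).mul (hcw 3))).sub
      ((continuous_const.mul (hcv 3)).mul (hcw 1))).sub ((hcv 4).mul hcw0)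
  have hBc : Continuous B := by
    apply hcv0.mul
    exact (((hcw0.mul (hcu 4)).add ((continuous_const.mul (hcw 1)).mul (hcu 3))).sub
      ((continuous_const.mul (hcw 3)).mul (hcu 1))).sub ((hcw 4).mul hcu0)
  have hCc : Continuous C := by
    apply hcw0.mul
    exact (((hcu0.mul (hcv 4)).add ((continuous_const.mul (hcu 1)).mul (hcv 3))).sub
      ((continuous_const.mul (hcu 3)).mul (hcv 1))).sub ((hcu 4).mul hcv0)
  have hωA : ω u (bracket v w) = ∫ x in (0:ℝ)..1, A x := by
    rw [hω, hbracket]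
    exact intervalIntegral.integral_congr fun x _ => by
      rw [GF.bracket3 v w hv hw x]
  have hωB : ω v (bracket w u) = ∫ x in (0:ℝ)..1, B x := by
    rw [hω, hbracket]
    exact intervalIntegral.integral_congr fun x _ => by
      rw [GF.bracket3 w u hw hu x]
  have hωC : ω w (bracket u v) = ∫ x in (0:ℝ)..1, C x := by
    rw [hω, hbracket]
    exact intervalIntegral.integral_congr fun x _ => by
      rw [GF.bracket3 u v hu hv x]
  rw [hωA, hωB, hωC,
    ← intervalIntegral.integral_add (hAc.intervalIntegrable 0 1) (hBc.intervalIntegrable 0 1),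
    ← intervalIntegral.integral_add (f := fun x => A x + B x) ((hAc.add hBc).intervalIntegrable 0 1)
      (hCc.intervalIntegrable 0 1)]
  -- the antiderivative
  set P : ℝ → F := fun x =>
    2 * (u x * iteratedDeriv 1 v x * iteratedDeriv 2 w x
      - u x * iteratedDeriv 2 v x * iteratedDeriv 1 w x
      - iteratedDeriv 1 u x * v x * iteratedDeriv 2 w x
      + iteratedDeriv 1 u x * iteratedDeriv 2 v x * w x
      + iteratedDeriv 2 u x * v x * iteratedDeriv 1 w x
      - iteratedDeriv 2 u x * iteratedDeriv 1 v x * w x) with hP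
  have Hu := GF.hasDerivAt_iter u hu
  have Hv := GF.hasDerivAt_iter v hv
  have Hw := GF.hasDerivAt_iter w hw
  have hu0 : ∀ y : ℝ, HasDerivAt u (iteratedDeriv 1 u y) y := by
    intro y; have := Hu 0 y; rwa [iteratedDeriv_zero] at this
  have hv0 : ∀ y : ℝ, HasDerivAt v (iteratedDeriv 1 v y) y := by
    intro y; have := Hv 0 y; rwa [iteratedDeriv_zero] at this
  have hw0 : ∀ y : ℝ, HasDerivAt w (iteratedDeriv 1 w y) y := by
    intro y; have := Hw 0 y; rwa [iteratedDeriv_zero] at this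
  have hPderiv : ∀ x : ℝ, HasDerivAt P (A x + B x + C x) x := by
    intro x
    have hraw := (((((((hu0 x).mul (Hv 1 x)).mul (Hw 2 x)).sub
        (((hu0 x).mul (Hv 2 x)).mul (Hw 1 x))).sub
        (((Hu 1 x).mul (hv0 x)).mul (Hw 2 x))).add
        (((Hu 1 x).mul (Hv 2 x)).mul (hw0 x))).add
        (((Hu 2 x).mul (hv0 x)).mul (Hw 1 x))).sub
        (((Hu 2 x).mul (Hv 1 x)).mul (hw0 x))
    have hraw2 := hraw.const_mul (2 : F)
    have : HasDerivAt P (A x + B x + C x) x := by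
      refine hraw2.congr_deriv ?_
      simp only [hA, hB, hC, Pi.mul_apply]
      ring
    exact this
  rw [intervalIntegral.integral_eq_sub_of_hasDerivAt
    (fun x _ => hPderiv x) (((hAc.add hBc).add hCc).intervalIntegrable 0 1)]
  -- periodicity gives P 1 = P 0
  have pe : ∀ (f : ℝ → F), Function.Periodic f 1 → ∀ k : ℕ,
      iteratedDeriv k f 1 = iteratedDeriv k f 0 := by
    intro f hf k
    simpa using GF.periodic_iter f hf k 0
  have hu1 : u 1 = u 0 := by simpa using hup 0
  have hv1 : v 1 = v 0 := by simpa using hvp 0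
  have hw1 : w 1 = w 0 := by simpa using hwp 0
  have : P 1 = P 0 := by
    simp only [hP, hu1, hv1, hw1, pe u hup, pe v hvp, pe w hwp]
  rw [this, sub_self]
end

section
/- Let F be a finite-dimensional commutative associative normed ℝ-algebra. On pairs (u, a) where u : ℝ → F is smooth and 1-periodic and a ∈ F, define the bracket [(u, a), (v, b)] := (u ∘ v' − u' ∘ v, ∫₀¹ u ∘ v''' dx). This bracket is antisymmetric and satisfies the Jacobi identity, i.e., the centrally extended bracket makes the Frobenius–Virasoro algebra vir_F into a Lie algebra. -/
set_option linter.unusedSectionVars false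

open Function intervalIntegral
open scoped ContDiff

section FrobViraAux

variable {F : Type*} [NormedCommRing F] [NormedAlgebra ℝ F] [FiniteDimensional ℝ F]

private lemma fv_dC {f : ℝ → F} (hf : ContDiff ℝ ∞ f) : ContDiff ℝ ∞ (deriv f) :=
  (contDiff_infty_iff_deriv.mp hf).2

private lemma fv_dD {f : ℝ → F} (hf : ContDiff ℝ ∞ f) : Differentiable ℝ f :=
  hf.differentiable (by simp)

private lemma fv_pd {f : ℝ → F} (hp : Function.Periodic f 1) :
    Function.Periodic (deriv f) 1 := by
  intro x
  have h : (fun y => f (y + 1)) = f := funext fun y => hp y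
  rw [← deriv_comp_add_const, h]

private lemma fv_iter3 (f : ℝ → F) : iteratedDeriv 3 f = deriv (deriv (deriv f)) := by
  rw [show (3:ℕ) = 2+1 from rfl, iteratedDeriv_succ,
    show (2:ℕ) = 1+1 from rfl, iteratedDeriv_succ, iteratedDeriv_one]

private lemma fv_cont_iter3 {f : ℝ → F} (hf : ContDiff ℝ ∞ f) :
    Continuous (iteratedDeriv 3 f) := by
  rw [fv_iter3]; exact (fv_dC (fv_dC (fv_dC hf))).continuous

private lemma fv_br_smooth {v w : ℝ → F} (hv : ContDiff ℝ ∞ v) (hw : ContDiff ℝ ∞ w) :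
    ContDiff ℝ ∞ (fun x => v x * deriv w x - deriv v x * w x) :=
  (hv.mul (fv_dC hw)).sub ((fv_dC hv).mul hw)

private lemma fv_int_deriv_periodic {g : ℝ → F} (hg : ContDiff ℝ ∞ g)
    (hp : Function.Periodic g 1) : ∫ x in (0:ℝ)..1, deriv g x = 0 := by
  rw [integral_deriv_eq_sub (fun x _ => fv_dD hg x)
    (((fv_dC hg).continuous).intervalIntegrable 0 1)]
  have h := hp 0
  rw [zero_add] at h
  rw [h, sub_self]

private lemma fv_deriv_br {v w : ℝ → F} (hv : ContDiff ℝ ∞ v) (hw : ContDiff ℝ ∞ w)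
    (y : ℝ) :
    deriv (fun x => v x * deriv w x - deriv v x * w x) y
      = v y * deriv (deriv w) y - deriv (deriv v) y * w y := by
  have h := (((fv_dD hv y).hasDerivAt.mul (fv_dD (fv_dC hw) y).hasDerivAt).sub
    ((fv_dD (fv_dC hv) y).hasDerivAt.mul (fv_dD hw y).hasDerivAt)).deriv
  simp only [Pi.mul_def, Pi.sub_def, Pi.add_def] at h
  rw [h]; ring

private lemma fv_d3_br {v w : ℝ → F} (hv : ContDiff ℝ ∞ v) (hw : ContDiff ℝ ∞ w)
    (x : ℝ) :
    deriv (deriv (deriv (fun x => v x * deriv w x - deriv v x * w x))) x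
      = v x * deriv (deriv (deriv (deriv w))) x
        + 2 * (deriv v x * deriv (deriv (deriv w)) x)
        - 2 * (deriv (deriv (deriv v)) x * deriv w x)
        - deriv (deriv (deriv (deriv v))) x * w x := by
  have e1 : deriv (fun x => v x * deriv w x - deriv v x * w x)
      = fun y => v y * deriv (deriv w) y - deriv (deriv v) y * w y :=
    funext (fv_deriv_br hv hw)
  have e2 : deriv (fun y => v y * deriv (deriv w) y - deriv (deriv v) y * w y)
      = fun y => (deriv v y * deriv (deriv w) y + v y * deriv (deriv (deriv w)) y)
          - (deriv (deriv (deriv v)) y * w y + deriv (deriv v) y * deriv w y) :=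
    funext fun y => (((fv_dD hv y).hasDerivAt.mul (fv_dD (fv_dC (fv_dC hw)) y).hasDerivAt).sub
      ((fv_dD (fv_dC (fv_dC hv)) y).hasDerivAt.mul (fv_dD hw y).hasDerivAt)).deriv
  rw [e1, e2]
  have h := ((((fv_dD (fv_dC hv) x).hasDerivAt.mul (fv_dD (fv_dC (fv_dC hw)) x).hasDerivAt).add
      ((fv_dD hv x).hasDerivAt.mul (fv_dD (fv_dC (fv_dC (fv_dC hw))) x).hasDerivAt)).sub
      (((fv_dD (fv_dC (fv_dC (fv_dC hv))) x).hasDerivAt.mul (fv_dD hw x).hasDerivAt).add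
      ((fv_dD (fv_dC (fv_dC hv)) x).hasDerivAt.mul (fv_dD (fv_dC hw) x).hasDerivAt))).deriv
  simp only [Pi.mul_def, Pi.sub_def, Pi.add_def] at h
  rw [h]; ring

end FrobViraAux

/-- The centrally extended bracket
`[(u,a),(v,b)] := (u ∘ v' − u' ∘ v, ∫₀¹ u ∘ v''' dx)`
on pairs of a smooth 1-periodic `F`-valued function and an element of `F`
is antisymmetric and satisfies the Jacobi identity: the Frobenius–Virasoro
algebra `vir_F` is a Lie algebra. -/
theorem frobeniusVirasoro_lieAlgebra
    {F : Type*} [NormedCommRing F] [NormedAlgebra ℝ F] [FiniteDimensional ℝ F]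
    (Bk : ((ℝ → F) × F) → ((ℝ → F) × F) → ((ℝ → F) × F))
    (hBk : ∀ p q : (ℝ → F) × F,
      Bk p q = (fun x => p.1 x * deriv q.1 x - deriv p.1 x * q.1 x,
        ∫ x in (0:ℝ)..1, p.1 x * iteratedDeriv 3 q.1 x))
    (u v w : ℝ → F) (a b c : F)
    (hu : ContDiff ℝ (⊤ : ℕ∞) u) (hv : ContDiff ℝ (⊤ : ℕ∞) v) (hw : ContDiff ℝ (⊤ : ℕ∞) w)
    (hup : Function.Periodic u 1) (hvp : Function.Periodic v 1)
    (hwp : Function.Periodic w 1) :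
    Bk (u, a) (v, b) = -Bk (v, b) (u, a) ∧
    Bk (u, a) (Bk (v, b) (w, c)) + Bk (v, b) (Bk (w, c) (u, a))
      + Bk (w, c) (Bk (u, a) (v, b)) = 0 := by
  have hu : ContDiff ℝ ∞ u := hu.of_le (by simp)
  have hv : ContDiff ℝ ∞ v := hv.of_le (by simp)
  have hw : ContDiff ℝ ∞ w := hw.of_le (by simp)
  constructor
  · rw [hBk, hBk]
    simp only [Prod.neg_mk, Prod.mk.injEq]
    constructor
    · funext x
      simp only [Pi.neg_apply]
      ring
    · apply eq_neg_of_add_eq_zero_left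
      have hi1 : IntervalIntegrable (fun x => u x * iteratedDeriv 3 v x)
          MeasureTheory.volume 0 1 :=
        (hu.continuous.mul (fv_cont_iter3 hv)).intervalIntegrable 0 1
      have hi2 : IntervalIntegrable (fun x => v x * iteratedDeriv 3 u x)
          MeasureTheory.volume 0 1 :=
        (hv.continuous.mul (fv_cont_iter3 hu)).intervalIntegrable 0 1
      rw [← intervalIntegral.integral_add hi1 hi2]
      have e : (fun x => u x * iteratedDeriv 3 v x + v x * iteratedDeriv 3 u x)
          = deriv (fun x => u x * deriv (deriv v) x - deriv u x * deriv v x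
              + deriv (deriv u) x * v x) := by
        funext y
        have h := ((((fv_dD hu y).hasDerivAt.mul (fv_dD (fv_dC (fv_dC hv)) y).hasDerivAt).sub
            ((fv_dD (fv_dC hu) y).hasDerivAt.mul (fv_dD (fv_dC hv) y).hasDerivAt)).add
            ((fv_dD (fv_dC (fv_dC hu)) y).hasDerivAt.mul (fv_dD hv y).hasDerivAt)).deriv
        simp only [Pi.mul_def, Pi.sub_def, Pi.add_def] at h
        rw [fv_iter3, fv_iter3, h]; ring
      rw [e]
      apply fv_int_deriv_periodic
      · exact ((hu.mul (fv_dC (fv_dC hv))).sub ((fv_dC hu).mul (fv_dC hv))).add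
          ((fv_dC (fv_dC hu)).mul hv)
      · intro x
        simp only
        rw [hup x, fv_pd (fv_pd hvp) x, fv_pd hup x, fv_pd hvp x, fv_pd (fv_pd hup) x, hvp x]
  · simp only [hBk]
    rw [Prod.mk_add_mk, Prod.mk_add_mk, Prod.mk_eq_zero]
    constructor
    · funext x
      simp only [Pi.add_apply, Pi.zero_apply]
      rw [fv_deriv_br hv hw x, fv_deriv_br hw hu x, fv_deriv_br hu hv x]
      ring
    · have hi1 : IntervalIntegrable (fun x => u x *
          iteratedDeriv 3 (fun x => v x * deriv w x - deriv v x * w x) x)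
          MeasureTheory.volume 0 1 :=
        (hu.continuous.mul (fv_cont_iter3 (fv_br_smooth hv hw))).intervalIntegrable 0 1
      have hi2 : IntervalIntegrable (fun x => v x *
          iteratedDeriv 3 (fun x => w x * deriv u x - deriv w x * u x) x)
          MeasureTheory.volume 0 1 :=
        (hv.continuous.mul (fv_cont_iter3 (fv_br_smooth hw hu))).intervalIntegrable 0 1
      have hi3 : IntervalIntegrable (fun x => w x *
          iteratedDeriv 3 (fun x => u x * deriv v x - deriv u x * v x) x)
          MeasureTheory.volume 0 1 :=
        (hw.continuous.mul (fv_cont_iter3 (fv_br_smooth hu hv))).intervalIntegrable 0 1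
      rw [← intervalIntegral.integral_add hi1 hi2, ← intervalIntegral.integral_add (hi1.add hi2) hi3]
      have e : (fun x => (u x * iteratedDeriv 3 (fun x => v x * deriv w x - deriv v x * w x) x
            + v x * iteratedDeriv 3 (fun x => w x * deriv u x - deriv w x * u x) x)
            + w x * iteratedDeriv 3 (fun x => u x * deriv v x - deriv u x * v x) x)
          = deriv (fun y =>
              (u y * deriv v y * deriv (deriv w) y
                - u y * deriv (deriv v) y * deriv w y
                - deriv u y * v y * deriv (deriv w) y
                + deriv u y * deriv (deriv v) y * w y
                + deriv (deriv u) y * v y * deriv w y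
                - deriv (deriv u) y * deriv v y * w y)
              + (u y * deriv v y * deriv (deriv w) y
                - u y * deriv (deriv v) y * deriv w y
                - deriv u y * v y * deriv (deriv w) y
                + deriv u y * deriv (deriv v) y * w y
                + deriv (deriv u) y * v y * deriv w y
                - deriv (deriv u) y * deriv v y * w y)) := by
        funext x
        have t1 := ((fv_dD hu x).hasDerivAt.mul (fv_dD (fv_dC hv) x).hasDerivAt).mul
          (fv_dD (fv_dC (fv_dC hw)) x).hasDerivAt
        have t2 := ((fv_dD hu x).hasDerivAt.mul (fv_dD (fv_dC (fv_dC hv)) x).hasDerivAt).mul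
          (fv_dD (fv_dC hw) x).hasDerivAt
        have t3 := ((fv_dD (fv_dC hu) x).hasDerivAt.mul (fv_dD hv x).hasDerivAt).mul
          (fv_dD (fv_dC (fv_dC hw)) x).hasDerivAt
        have t4 := ((fv_dD (fv_dC hu) x).hasDerivAt.mul (fv_dD (fv_dC (fv_dC hv)) x).hasDerivAt).mul
          (fv_dD hw x).hasDerivAt
        have t5 := ((fv_dD (fv_dC (fv_dC hu)) x).hasDerivAt.mul (fv_dD hv x).hasDerivAt).mul
          (fv_dD (fv_dC hw) x).hasDerivAt
        have t6 := ((fv_dD (fv_dC (fv_dC hu)) x).hasDerivAt.mul (fv_dD (fv_dC hv) x).hasDerivAt).mul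
          (fv_dD hw x).hasDerivAt
        have hT := ((((t1.sub t2).sub t3).add t4).add t5).sub t6
        have hG := (hT.add hT).deriv
        simp only [Pi.mul_def, Pi.sub_def, Pi.add_def] at hG
        rw [fv_iter3, fv_iter3, fv_iter3, fv_d3_br hv hw x, fv_d3_br hw hu x,
          fv_d3_br hu hv x, hG]
        ring
      rw [e]
      apply fv_int_deriv_periodic
      · have hT : ContDiff ℝ ∞ (fun y => u y * deriv v y * deriv (deriv w) y
            - u y * deriv (deriv v) y * deriv w y
            - deriv u y * v y * deriv (deriv w) y
            + deriv u y * deriv (deriv v) y * w y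
            + deriv (deriv u) y * v y * deriv w y
            - deriv (deriv u) y * deriv v y * w y) :=
          (((((hu.mul (fv_dC hv)).mul (fv_dC (fv_dC hw))).sub
            ((hu.mul (fv_dC (fv_dC hv))).mul (fv_dC hw))).sub
            (((fv_dC hu).mul hv).mul (fv_dC (fv_dC hw)))).add
            (((fv_dC hu).mul (fv_dC (fv_dC hv))).mul hw)).add
            (((fv_dC (fv_dC hu)).mul hv).mul (fv_dC hw)) |>.sub
            (((fv_dC (fv_dC hu)).mul (fv_dC hv)).mul hw)
        exact hT.add hT
      · intro x
        simp only
        rw [hup x, hvp x, hwp x, fv_pd hup x, fv_pd hvp x, fv_pd hwp x,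
          fv_pd (fv_pd hup) x, fv_pd (fv_pd hvp) x, fv_pd (fv_pd hwp) x]
end

section
/- Let F be a commutative associative normed ℝ-algebra, let α, β, ζ ∈ F, let u : ℝ → F be smooth, and set m := α ∘ u − β ∘ u''. Then pointwise on ℝ: 2 m ∘ u' + m' ∘ u + ζ ∘ u''' = d/dx ( ζ ∘ u'' + (3/2)·(α ∘ u ∘ u) − (1/2)·(β ∘ u' ∘ u') − β ∘ u ∘ u'' ). (This is the bihamiltonian recursion identity J₂(δH₁/δm) = J₁(δH₂/δm) with J₁ = β∂³ − α∂ = −∂Λ, underlying Theorem: the F-valued Euler equation is bihamiltonian.) -/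
/-- The bihamiltonian recursion identity `J₂(δH₁/δm) = J₁(δH₂/δm)`: with
`m = α∘u − β∘u''`, pointwise
`2m∘u' + m'∘u + ζ∘u''' = d/dx (ζ∘u'' + (3/2)(α∘u∘u) − (1/2)(β∘u'∘u') − β∘u∘u'')`. -/
theorem bihamiltonian_recursion_identity
    {F : Type*} [NormedCommRing F] [NormedAlgebra ℝ F]
    (α β ζ : F) (u : ℝ → F) (hu : ContDiff ℝ (⊤ : ℕ∞) u)
    (m : ℝ → F) (hm : ∀ x, m x = α * u x - β * iteratedDeriv 2 u x) :
    ∀ x : ℝ,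
      2 * m x * deriv u x + deriv m x * u x + ζ * iteratedDeriv 3 u x
        = deriv (fun y =>
            ζ * iteratedDeriv 2 u y + (3/2 : ℝ) • (α * u y * u y)
              - (1/2 : ℝ) • (β * deriv u y * deriv u y)
              - β * u y * iteratedDeriv 2 u y) x := by
  intro x
  have hd : ∀ n : ℕ, Differentiable ℝ (iteratedDeriv n u) := fun n =>
    hu.differentiable_iteratedDeriv n (by exact_mod_cast ENat.natCast_lt_top n)
  have h0 : HasDerivAt u (deriv u x) x := ((hd 0).differentiableAt).hasDerivAt
  have h1 : HasDerivAt (deriv u) (iteratedDeriv 2 u x) x := by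
    have := ((hd 1).differentiableAt (x := x)).hasDerivAt
    simpa [iteratedDeriv_succ, iteratedDeriv_one] using this
  have h2 : HasDerivAt (iteratedDeriv 2 u) (iteratedDeriv 3 u x) x := by
    have := ((hd 2).differentiableAt (x := x)).hasDerivAt
    simpa [iteratedDeriv_succ] using this
  have hmd : HasDerivAt m (α * deriv u x - β * iteratedDeriv 3 u x) x := by
    have : HasDerivAt (fun y => α * u y - β * iteratedDeriv 2 u y)
        (α * deriv u x - β * iteratedDeriv 3 u x) x :=
      (h0.const_mul α).sub (h2.const_mul β)
    exact this.congr_of_eventuallyEq (Filter.Eventually.of_forall fun y => (hm y))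
  have hR : HasDerivAt (fun y =>
            ζ * iteratedDeriv 2 u y + (3/2 : ℝ) • (α * u y * u y)
              - (1/2 : ℝ) • (β * deriv u y * deriv u y)
              - β * u y * iteratedDeriv 2 u y)
      (ζ * iteratedDeriv 3 u x
        + (3/2 : ℝ) • (α * deriv u x * u x + α * u x * deriv u x)
        - (1/2 : ℝ) • (β * iteratedDeriv 2 u x * deriv u x + β * deriv u x * iteratedDeriv 2 u x)
        - (β * deriv u x * iteratedDeriv 2 u x + β * u x * iteratedDeriv 3 u x)) x := by
    exact (((h2.const_mul ζ).add
      ((((h0.const_mul α).mul h0).const_smul (3/2 : ℝ)))).sub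
      ((((h1.const_mul β).mul h1).const_smul (1/2 : ℝ)))).sub
      (((h0.const_mul β).mul h2))
  rw [hR.deriv, hmd.deriv, hm x]
  have key : ∀ (r : ℝ) (c : F), r • c = algebraMap ℝ F r * c := fun r c => Algebra.smul_def r c
  rw [key, key]
  have h32 : algebraMap ℝ F (3/2) * (α * deriv u x * u x + α * u x * deriv u x)
      = 3 * (α * u x * deriv u x) := by
    have : (α * deriv u x * u x + α * u x * deriv u x) = algebraMap ℝ F 2 * (α * u x * deriv u x) := by
      rw [map_ofNat]; ring
    rw [this, ← mul_assoc, ← map_mul, show ((3:ℝ)/2*2 : ℝ) = 3 by norm_num, map_ofNat]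
  have h12 : algebraMap ℝ F (1/2) * (β * iteratedDeriv 2 u x * deriv u x + β * deriv u x * iteratedDeriv 2 u x)
      = β * deriv u x * iteratedDeriv 2 u x := by
    have : (β * iteratedDeriv 2 u x * deriv u x + β * deriv u x * iteratedDeriv 2 u x)
        = algebraMap ℝ F 2 * (β * deriv u x * iteratedDeriv 2 u x) := by
      rw [map_ofNat]; ring
    rw [this, ← mul_assoc, ← map_mul, show ((1:ℝ)/2*2 : ℝ) = 1 by norm_num, map_one, one_mul]
  rw [h32, h12]
  ring
end

section
/- Let F be a finite-dimensional commutative associative normed ℝ-algebra with a continuous ℝ-linear trace map tr : F → ℝ, let α, β, ζ ∈ F, and let u : ℝ × ℝ → F be smooth and 1-periodic in the space variable x. Set m := α ∘ u − β ∘ u_{xx}. If u solves the F-valued Euler equation m_t + 2 m ∘ u_x + m_x ∘ u + ζ ∘ u_{xxx} = 0, then the Hamiltonian H₁(t) = (1/2) ∫₀¹ tr( m ∘ u ) dx is constant in t. -/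
open intervalIntegral MeasureTheory Metric Set

namespace H1Aux

variable {F : Type*} [NormedCommRing F] [NormedAlgebra ℝ F]

noncomputable def pd (v : ℝ × ℝ) (f : ℝ × ℝ → F) : ℝ × ℝ → F :=
  fun p => fderiv ℝ f p v

theorem pd_contDiff {f : ℝ × ℝ → F} (hf : ContDiff ℝ (⊤ : ℕ∞) f) (v : ℝ × ℝ) :
    ContDiff ℝ (⊤ : ℕ∞) (pd v f) :=
  (hf.fderiv_right (by simp)).clm_apply contDiff_const

theorem hasDerivAt_slice_x {f : ℝ × ℝ → F} (hf : ContDiff ℝ (⊤ : ℕ∞) f) (x t : ℝ) :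
    HasDerivAt (fun y => f (y, t)) (pd (1, 0) f (x, t)) x := by
  have h1 : HasDerivAt (fun y : ℝ => ((y, t) : ℝ × ℝ)) ((1 : ℝ), (0 : ℝ)) x := by
    simpa using (hasDerivAt_id x).prodMk (hasDerivAt_const x t)
  exact ((hf.differentiable (by simp) (x, t)).hasFDerivAt).comp_hasDerivAt x h1

theorem hasDerivAt_slice_t {f : ℝ × ℝ → F} (hf : ContDiff ℝ (⊤ : ℕ∞) f) (x t : ℝ) :
    HasDerivAt (fun s => f (x, s)) (pd (0, 1) f (x, t)) t := by
  have h1 : HasDerivAt (fun s : ℝ => ((x, s) : ℝ × ℝ)) ((0 : ℝ), (1 : ℝ)) t := by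
    simpa using (hasDerivAt_const t x).prodMk (hasDerivAt_id t)
  exact ((hf.differentiable (by simp) (x, t)).hasFDerivAt).comp_hasDerivAt t h1

theorem pd_sub {f g : ℝ × ℝ → F} (hf : ContDiff ℝ (⊤ : ℕ∞) f) (hg : ContDiff ℝ (⊤ : ℕ∞) g)
    (v p) : pd v (fun q => f q - g q) p = pd v f p - pd v g p := by
  unfold pd
  rw [fderiv_fun_sub (hf.differentiable (by simp) p) (hg.differentiable (by simp) p)]
  rfl

theorem pd_const_mul {f : ℝ × ℝ → F} (hf : ContDiff ℝ (⊤ : ℕ∞) f) (c : F)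
    (v p) : pd v (fun q => c * f q) p = c * pd v f p := by
  unfold pd
  rw [fderiv_const_mul (hf.differentiable (by simp) p) c]
  simp [smul_eq_mul]

theorem pd_mul {f g : ℝ × ℝ → F} (hf : ContDiff ℝ (⊤ : ℕ∞) f) (hg : ContDiff ℝ (⊤ : ℕ∞) g)
    (v p) : pd v (fun q => f q * g q) p = pd v f p * g p + f p * pd v g p := by
  unfold pd
  rw [fderiv_fun_mul (hf.differentiable (by simp) p) (hg.differentiable (by simp) p)]
  simp [smul_eq_mul]
  ring

theorem pd_pd {f : ℝ × ℝ → F} (hf : ContDiff ℝ (⊤ : ℕ∞) f) (v w : ℝ × ℝ) (p : ℝ × ℝ) :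
    pd v (pd w f) p = fderiv ℝ (fderiv ℝ f) p v w := by
  have hd : HasFDerivAt (fderiv ℝ f) (fderiv ℝ (fderiv ℝ f) p) p :=
    (((hf.fderiv_right (m := (⊤ : ℕ∞)) (by simp)).differentiable (by simp)) p).hasFDerivAt
  have h2 : HasFDerivAt (fun q => fderiv ℝ f q w)
      ((ContinuousLinearMap.apply ℝ F w).comp (fderiv ℝ (fderiv ℝ f) p)) p :=
    (ContinuousLinearMap.apply ℝ F w).hasFDerivAt.comp p hd
  show fderiv ℝ (fun q => fderiv ℝ f q w) p v = _
  rw [h2.fderiv]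
  rfl

theorem pd_swap {f : ℝ × ℝ → F} (hf : ContDiff ℝ (⊤ : ℕ∞) f) (v w : ℝ × ℝ) (p : ℝ × ℝ) :
    pd v (pd w f) p = pd w (pd v f) p := by
  rw [pd_pd hf v w p, pd_pd hf w v p]
  exact second_derivative_symmetric
    (fun y => ((hf.differentiable (by simp)) y).hasFDerivAt)
    ((((hf.fderiv_right (m := (⊤ : ℕ∞)) (by simp)).differentiable (by simp)) p).hasFDerivAt) v w

theorem pd_periodic {f : ℝ × ℝ → F} (hf : ContDiff ℝ (⊤ : ℕ∞) f)
    (hp : ∀ p : ℝ × ℝ, f (p + (1, 0)) = f p) (v p) :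
    pd v f (p + (1, 0)) = pd v f p := by
  have h1 : HasFDerivAt f (fderiv ℝ f (p + (1, 0))) (p + (1, 0)) :=
    (hf.differentiable (by simp) _).hasFDerivAt
  have h2 : HasFDerivAt (fun q : ℝ × ℝ => f (q + (1, 0)))
      (fderiv ℝ f (p + (1, 0))) p := by
    have := h1.comp p ((hasFDerivAt_id p).add_const ((1, 0) : ℝ × ℝ))
    simpa [Function.comp_def] using this
  rw [funext hp] at h2
  show fderiv ℝ f (p + (1, 0)) v = fderiv ℝ f p v
  rw [h2.fderiv]

theorem conserved (tr : F →L[ℝ] ℝ) (α β ζ : F) (U M : ℝ × ℝ → F)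
    (hU : ContDiff ℝ (⊤ : ℕ∞) U)
    (hperU : ∀ p : ℝ × ℝ, U (p + (1, 0)) = U p)
    (hM : ∀ p, M p = α * U p - β * pd (1, 0) (pd (1, 0) U) p)
    (hE : ∀ p : ℝ × ℝ,
      pd (0, 1) M p + 2 * M p * pd (1, 0) U p + pd (1, 0) M p * U p
        + ζ * pd (1, 0) (pd (1, 0) (pd (1, 0) U)) p = 0)
    (t₁ t₂ : ℝ) :
    (∫ x in (0:ℝ)..1, tr (M (x, t₁) * U (x, t₁)))
      = ∫ x in (0:ℝ)..1, tr (M (x, t₂) * U (x, t₂)) := by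
  -- smoothness of the basic blocks
  have hax : ContDiff ℝ (⊤ : ℕ∞) (pd ((1:ℝ), (0:ℝ)) U) := pd_contDiff hU _
  have hat : ContDiff ℝ (⊤ : ℕ∞) (pd ((0:ℝ), (1:ℝ)) U) := pd_contDiff hU _
  have haxx : ContDiff ℝ (⊤ : ℕ∞) (pd ((1:ℝ), (0:ℝ)) (pd (1, 0) U)) := pd_contDiff hax _
  have haxt : ContDiff ℝ (⊤ : ℕ∞) (pd ((0:ℝ), (1:ℝ)) (pd (1, 0) U)) := pd_contDiff hax _
  have hMc : ContDiff ℝ (⊤ : ℕ∞) M := by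
    rw [funext hM]
    exact (contDiff_const.mul hU).sub (contDiff_const.mul haxx)
  have hMUc : ContDiff ℝ (⊤ : ℕ∞) (fun q => M q * U q) := hMc.mul hU
  -- the flux function
  set g : ℝ × ℝ → F := fun q =>
      β * (U q * pd (0, 1) (pd (1, 0) U) q - pd (1, 0) U q * pd (0, 1) U q)
      - 2 * (M q * (U q * U q))
      - ζ * (2 * (U q * pd (1, 0) (pd (1, 0) U) q)
          - pd (1, 0) U q * pd (1, 0) U q) with hgdef
  have hg1c : ContDiff ℝ (⊤ : ℕ∞) (fun q =>
      U q * pd (0, 1) (pd (1, 0) U) q - pd (1, 0) U q * pd (0, 1) U q) :=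
    (hU.mul haxt).sub (hax.mul hat)
  have hg2c : ContDiff ℝ (⊤ : ℕ∞) (fun q => M q * (U q * U q)) := hMc.mul (hU.mul hU)
  have hg3c : ContDiff ℝ (⊤ : ℕ∞) (fun q =>
      2 * (U q * pd (1, 0) (pd (1, 0) U) q) - pd (1, 0) U q * pd (1, 0) U q) :=
    (contDiff_const.mul (hU.mul haxx)).sub (hax.mul hax)
  have hb1 : ContDiff ℝ (⊤ : ℕ∞) (fun q =>
      β * (U q * pd (0, 1) (pd (1, 0) U) q - pd (1, 0) U q * pd (0, 1) U q)) :=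
    contDiff_const.mul hg1c
  have hb2 : ContDiff ℝ (⊤ : ℕ∞) (fun q => (2:F) * (M q * (U q * U q))) :=
    contDiff_const.mul hg2c
  have hb3 : ContDiff ℝ (⊤ : ℕ∞) (fun q =>
      ζ * (2 * (U q * pd (1, 0) (pd (1, 0) U) q)
        - pd (1, 0) U q * pd (1, 0) U q)) := contDiff_const.mul hg3c
  have hsub1 : ContDiff ℝ (⊤ : ℕ∞) (fun q =>
      β * (U q * pd (0, 1) (pd (1, 0) U) q - pd (1, 0) U q * pd (0, 1) U q)
      - 2 * (M q * (U q * U q))) := hb1.sub hb2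
  have hgc : ContDiff ℝ (⊤ : ℕ∞) g := by
    rw [hgdef]; exact hsub1.sub hb3
  -- periodicity
  have hpax : ∀ q, pd ((1:ℝ), (0:ℝ)) U (q + (1, 0)) = pd (1, 0) U q :=
    pd_periodic hU hperU _
  have hpat : ∀ q, pd ((0:ℝ), (1:ℝ)) U (q + (1, 0)) = pd (0, 1) U q :=
    pd_periodic hU hperU _
  have hpaxx : ∀ q, pd ((1:ℝ), (0:ℝ)) (pd (1, 0) U) (q + (1, 0))
      = pd (1, 0) (pd (1, 0) U) q := pd_periodic hax hpax _
  have hpaxt : ∀ q, pd ((0:ℝ), (1:ℝ)) (pd (1, 0) U) (q + (1, 0))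
      = pd (0, 1) (pd (1, 0) U) q := pd_periodic hax hpax _
  have hpM : ∀ q, M (q + (1, 0)) = M q := by
    intro q; rw [hM, hM, hperU, hpaxx]
  have hpg : ∀ q, g (q + (1, 0)) = g q := by
    intro q
    simp only [hgdef]
    rw [hperU, hpax, hpat, hpaxx, hpaxt, hpM]
  -- the key pointwise identity
  have hkey : ∀ p : ℝ × ℝ,
      pd (0, 1) (fun q => M q * U q) p = pd (1, 0) g p := by
    intro p
    have cMU : pd (0, 1) (fun q => M q * U q) p
        = pd (0, 1) M p * U p + M p * pd (0, 1) U p := pd_mul hMc hU _ p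
    have sw1 : pd ((1:ℝ), (0:ℝ)) (pd (0, 1) (pd (1, 0) U)) p
        = pd (0, 1) (pd (1, 0) (pd (1, 0) U)) p := pd_swap hax _ _ p
    have sw2 : pd ((1:ℝ), (0:ℝ)) (pd (0, 1) U) p
        = pd (0, 1) (pd (1, 0) U) p := pd_swap hU _ _ p
    have cMt : pd ((0:ℝ), (1:ℝ)) M p
        = α * pd (0, 1) U p - β * pd (0, 1) (pd (1, 0) (pd (1, 0) U)) p := by
      rw [funext hM]
      rw [pd_sub (contDiff_const.mul hU) (contDiff_const.mul haxx),
        pd_const_mul hU, pd_const_mul haxx]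
    have cMx : pd ((1:ℝ), (0:ℝ)) M p
        = α * pd (1, 0) U p - β * pd (1, 0) (pd (1, 0) (pd (1, 0) U)) p := by
      rw [funext hM]
      rw [pd_sub (contDiff_const.mul hU) (contDiff_const.mul haxx),
        pd_const_mul hU, pd_const_mul haxx]
    have cg : pd ((1:ℝ), (0:ℝ)) g p
        = β * ((pd (1, 0) U p * pd (0, 1) (pd (1, 0) U) p
              + U p * pd (1, 0) (pd (0, 1) (pd (1, 0) U)) p)
            - (pd (1, 0) (pd (1, 0) U) p * pd (0, 1) U p
              + pd (1, 0) U p * pd (1, 0) (pd (0, 1) U) p))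
          - 2 * (pd (1, 0) M p * (U p * U p)
              + M p * (pd (1, 0) U p * U p + U p * pd (1, 0) U p))
          - ζ * (2 * (pd (1, 0) U p * pd (1, 0) (pd (1, 0) U) p
              + U p * pd (1, 0) (pd (1, 0) (pd (1, 0) U)) p)
            - (pd (1, 0) (pd (1, 0) U) p * pd (1, 0) U p
              + pd (1, 0) U p * pd (1, 0) (pd (1, 0) U) p)) := by
      simp only [hgdef]
      rw [pd_sub hsub1 hb3, pd_sub hb1 hb2,
        pd_const_mul hg1c, pd_const_mul hg2c, pd_const_mul hg3c,
        pd_sub (hU.mul haxt) (hax.mul hat),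
        pd_mul hU haxt, pd_mul hax hat,
        pd_mul hMc (hU.mul hU), pd_mul hU hU,
        pd_sub (contDiff_const.mul (hU.mul haxx)) (hax.mul hax),
        pd_const_mul (hU.mul haxx), pd_mul hU haxx, pd_mul hax hax]
    have hE' := hE p
    rw [cMt, cMx, hM p] at hE'
    rw [cMU, cg, sw1, sw2, cMt, cMx, hM p]
    linear_combination (2 * U p) * hE'
  -- the x-integral of the t-derivative vanishes
  have stepI : ∀ t : ℝ,
      (∫ x in (0:ℝ)..1, tr (pd (0, 1) (fun q => M q * U q) (x, t))) = 0 := by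
    intro t
    simp only [hkey]
    have hcont : Continuous fun x : ℝ => tr (pd ((1:ℝ), (0:ℝ)) g (x, t)) :=
      tr.continuous.comp ((pd_contDiff hgc _).continuous.comp
        (continuous_id.prodMk continuous_const))
    have hder : ∀ x ∈ uIcc (0:ℝ) 1,
        HasDerivAt (fun y => tr (g (y, t))) (tr (pd (1, 0) g (x, t))) x :=
      fun x _ => tr.hasFDerivAt.comp_hasDerivAt x (hasDerivAt_slice_x hgc x t)
    rw [intervalIntegral.integral_eq_sub_of_hasDerivAt hder
      (hcont.intervalIntegrable 0 1)]
    have hper1 : g (1, t) = g (0, t) := by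
      have := hpg ((0:ℝ), t)
      norm_num at this
      exact this
    rw [hper1]
    simp
  -- derivative of the Hamiltonian
  have hd : ∀ t₀ : ℝ, HasDerivAt
      (fun s => ∫ x in (0:ℝ)..1, tr (M (x, s) * U (x, s))) 0 t₀ := by
    intro t₀
    have hjc : Continuous fun p : ℝ × ℝ => tr (pd ((0:ℝ), (1:ℝ))
        (fun q => M q * U q) p) :=
      tr.continuous.comp (pd_contDiff hMUc _).continuous
    obtain ⟨C, hC⟩ := (IsCompact.exists_bound_of_continuousOn
      ((isCompact_Icc (a := (0:ℝ)) (b := 1)).prod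
        (isCompact_Icc (a := t₀ - 1) (b := t₀ + 1))) hjc.continuousOn)
    have key := intervalIntegral.hasDerivAt_integral_of_dominated_loc_of_deriv_le
      (μ := volume) (a := (0:ℝ)) (b := 1) (x₀ := t₀) (s := ball t₀ 1)
      (F := fun s x => tr (M (x, s) * U (x, s)))
      (F' := fun s x => tr (pd (0, 1) (fun q => M q * U q) (x, s)))
      (bound := fun _ => |C|) (ball_mem_nhds t₀ one_pos)
      (Filter.Eventually.of_forall fun s =>
        ((tr.continuous.comp (hMUc.continuous.comp
          (continuous_id.prodMk continuous_const))).aestronglyMeasurable))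
      ((tr.continuous.comp (hMUc.continuous.comp
        (continuous_id.prodMk continuous_const))).intervalIntegrable 0 1)
      ((tr.continuous.comp ((pd_contDiff hMUc _).continuous.comp
        (continuous_id.prodMk continuous_const))).aestronglyMeasurable)
      (Filter.Eventually.of_forall fun x hx s hs => by
        have hx' : x ∈ Icc (0:ℝ) 1 := by
          rw [Set.uIoc_of_le (by norm_num : (0:ℝ) ≤ 1)] at hx
          exact ⟨le_of_lt hx.1, hx.2⟩
        have hs' : s ∈ Icc (t₀ - 1) (t₀ + 1) := by
          rw [Real.ball_eq_Ioo] at hs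
          exact ⟨le_of_lt hs.1, le_of_lt hs.2⟩
        calc ‖tr (pd (0, 1) (fun q => M q * U q) (x, s))‖
            ≤ C := hC (x, s) ⟨hx', hs'⟩
          _ ≤ |C| := le_abs_self C)
      (intervalIntegrable_const)
      (Filter.Eventually.of_forall fun x _ s _ =>
        tr.hasFDerivAt.comp_hasDerivAt s (hasDerivAt_slice_t hMUc x s))
    have h2 := key.2
    rw [stepI t₀] at h2
    exact h2
  have hconst := is_const_of_deriv_eq_zero
    (f := fun s => ∫ x in (0:ℝ)..1, tr (M (x, s) * U (x, s)))
    (fun t => (hd t).differentiableAt) (fun t => (hd t).deriv)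
  exact hconst t₁ t₂

end H1Aux

/-- Conservation of the Hamiltonian `H₁(t) = (1/2)∫₀¹ tr(m∘u) dx` along solutions of
the `F`-valued Euler equation `m_t + 2m∘u_x + m_x∘u + ζ∘u_{xxx} = 0`,
`m = α∘u − β∘u_{xx}`. -/
theorem hamiltonian_H1_conserved
    {F : Type*} [NormedCommRing F] [NormedAlgebra ℝ F] [FiniteDimensional ℝ F]
    (tr : F →L[ℝ] ℝ) (α β ζ : F) (u : ℝ → ℝ → F)
    (hu : ContDiff ℝ (⊤ : ℕ∞) fun p : ℝ × ℝ => u p.1 p.2)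
    (hper : ∀ x t : ℝ, u (x + 1) t = u x t)
    (m : ℝ → ℝ → F)
    (hm : ∀ x t : ℝ, m x t = α * u x t - β * iteratedDeriv 2 (fun y => u y t) x)
    (heuler : ∀ x t : ℝ,
      deriv (fun s => m x s) t + 2 * m x t * deriv (fun y => u y t) x
        + deriv (fun y => m y t) x * u x t
        + ζ * iteratedDeriv 3 (fun y => u y t) x = 0) :
    ∀ t₁ t₂ : ℝ,
      (1/2 : ℝ) * ∫ x in (0:ℝ)..1, tr (m x t₁ * u x t₁)
        = (1/2 : ℝ) * ∫ x in (0:ℝ)..1, tr (m x t₂ * u x t₂) := by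
  open H1Aux in
  intro t₁ t₂
  set U : ℝ × ℝ → F := fun p => u p.1 p.2 with hUdef
  have hUc : ContDiff ℝ (⊤ : ℕ∞) U := hu
  have hax : ContDiff ℝ (⊤ : ℕ∞) (pd ((1:ℝ), (0:ℝ)) U) := pd_contDiff hUc _
  have haxx : ContDiff ℝ (⊤ : ℕ∞) (pd ((1:ℝ), (0:ℝ)) (pd (1, 0) U)) := pd_contDiff hax _
  set M' : ℝ × ℝ → F := fun q => α * U q - β * pd (1, 0) (pd (1, 0) U) q with hM'def
  have hM'c : ContDiff ℝ (⊤ : ℕ∞) M' := (contDiff_const.mul hUc).sub (contDiff_const.mul haxx)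
  -- translations between slice derivatives and pd
  have hax_eq : ∀ x t : ℝ, deriv (fun y => u y t) x = pd (1, 0) U (x, t) :=
    fun x t => (hasDerivAt_slice_x hUc x t).deriv
  have haxfun : ∀ t : ℝ, deriv (fun y => u y t) = fun x => pd (1, 0) U (x, t) :=
    fun t => funext fun x => hax_eq x t
  have haxx_eq : ∀ x t : ℝ,
      iteratedDeriv 2 (fun y => u y t) x = pd (1, 0) (pd (1, 0) U) (x, t) := by
    intro x t
    rw [iteratedDeriv_succ, iteratedDeriv_one, haxfun t]
    exact (hasDerivAt_slice_x hax x t).deriv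
  have haxxfun : ∀ t : ℝ,
      iteratedDeriv 2 (fun y => u y t) = fun x => pd (1, 0) (pd (1, 0) U) (x, t) :=
    fun t => funext fun x => haxx_eq x t
  have haxxx_eq : ∀ x t : ℝ,
      iteratedDeriv 3 (fun y => u y t) x = pd (1, 0) (pd (1, 0) (pd (1, 0) U)) (x, t) := by
    intro x t
    rw [iteratedDeriv_succ, haxxfun t]
    exact (hasDerivAt_slice_x haxx x t).deriv
  have hm' : ∀ x t : ℝ, m x t = M' (x, t) := by
    intro x t
    rw [hm, haxx_eq]
  have hperU : ∀ p : ℝ × ℝ, U (p + (1, 0)) = U p := by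
    intro p
    show u (p.1 + 1) (p.2 + 0) = u p.1 p.2
    rw [add_zero, hper]
  have hE : ∀ p : ℝ × ℝ,
      pd (0, 1) M' p + 2 * M' p * pd (1, 0) U p + pd (1, 0) M' p * U p
        + ζ * pd (1, 0) (pd (1, 0) (pd (1, 0) U)) p = 0 := by
    intro p
    have h := heuler p.1 p.2
    rw [show (fun s => m p.1 s) = fun s => M' (p.1, s) from funext fun s => hm' p.1 s,
      show (fun y => m y p.2) = fun y => M' (y, p.2) from funext fun y => hm' y p.2,
      (hasDerivAt_slice_t hM'c p.1 p.2).deriv,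
      (hasDerivAt_slice_x hM'c p.1 p.2).deriv,
      hax_eq, haxxx_eq, hm' p.1 p.2] at h
    exact h
  have hconsv := conserved tr α β ζ U M' hUc hperU (fun p => rfl) hE t₁ t₂
  have h₁ : (∫ x in (0:ℝ)..1, tr (m x t₁ * u x t₁))
      = ∫ x in (0:ℝ)..1, tr (M' (x, t₁) * U (x, t₁)) := by
    congr 1
    funext x
    rw [hm' x t₁]
  have h₂ : (∫ x in (0:ℝ)..1, tr (m x t₂ * u x t₂))
      = ∫ x in (0:ℝ)..1, tr (M' (x, t₂) * U (x, t₂)) := by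
    congr 1
    funext x
    rw [hm' x t₂]
  rw [h₁, h₂, hconsv]
end
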